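/- Let X be a connected scheme, let P be an X-scheme whose underlying topological space has open connected components (e.g., P locally noetherian), and let G be a finite (abstract) group acting on P by X-automorphisms such that the canonical morphism ⨿_{g ∈ G} P → P ×_X P, whose g-th component is (id_P, g·) : P → P ×_X P, is an isomorphism (i.e., P is a G-torsor over X). Let p be a point of P, let Q be the connected component of P containing p, and let H = {g ∈ G : g·Q = Q} be the subgroup of G stabilizing Q. Then the analogous canonical morphism ⨿_{h ∈ H} Q → Q ×_X Q is an isomorphism; that is, Q with the restricted H-action is an H-torsor over X. -/

import Mathlib

/-!
Over the open subscheme `Q ×_X Q` of `P ×_X P`, the torsor isomorphism `∐_G P ≅ P ×_X P`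
restricts to `∐_H Q ⟶ Q ×_X Q`. Indeed, a point `(x, g x)` with both coordinates in `Q`
forces `g ∈ H`: the homeomorphism `g` carries the connected component `Q` of `x` onto the
connected component of `g x`, which is again `Q`. So `∐_H Q ⟶ Q ×_X Q` is an open immersion
whose image is all of `Q ×_X Q`.
-/

open AlgebraicGeometry CategoryTheory Limits

set_option maxHeartbeats 1000000

universe u

theorem Homeomorph.image_connectedComponent {X Y : Type*} [TopologicalSpace X]
    [TopologicalSpace Y] (h : X ≃ₜ Y) (x : X) :
    h '' connectedComponent x = connectedComponent (h x) := by
  simpa [connectedComponentIn_univ] using h.image_connectedComponentIn (Set.mem_univ x)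

theorem Homeomorph.image_connectedComponent_eq_self {X : Type*} [TopologicalSpace X]
    (h : X ≃ₜ X) {x y : X} (hx : x ∈ connectedComponent y)
    (hhx : h x ∈ connectedComponent y) :
    h '' connectedComponent y = connectedComponent y := by
  rw [connectedComponent_eq hx, h.image_connectedComponent, ← connectedComponent_eq hx,
    connectedComponent_eq hhx]

theorem isOpenImmersion_sigmaDesc_comp_ι {ι κ : Type u} {P Q : Scheme.{u}} (j : Q ⟶ P)
    [IsOpenImmersion j] {s : κ → ι} (hs : Function.Injective s) :
    IsOpenImmersion (Sigma.desc (fun k => j ≫ Sigma.ι (fun _ : ι => P) (s k))) := by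
  refine isOpenImmersion_sigmaDesc _ _ fun k l hkl => ?_
  refine Set.disjoint_left.mpr ?_
  rintro _ ⟨x, rfl⟩ ⟨y, hy⟩
  rw [Scheme.Hom.comp_apply, Scheme.Hom.comp_apply, sigmaι_eq_iff] at hy
  exact hkl (hs (Sigma.mk.inj_iff.mp hy).1.symm)

theorem isIso_of_comp_eq_of_range_subset {A B D : Scheme.{u}} (m : A ⟶ B) (i : B ⟶ D)
    (e : A ⟶ D) [IsOpenImmersion i] [IsOpenImmersion e] (he : m ≫ i = e)
    (hrange : Set.range i ⊆ Set.range e) : IsIso m := by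
  have : IsOpenImmersion (m ≫ i) := he ▸ ‹_›
  have : IsOpenImmersion m := IsOpenImmersion.of_comp m i
  refine (isIso_iff_isOpenImmersion_and_surjective m).mpr ⟨this, ⟨fun y => ?_⟩⟩
  obtain ⟨x, hx⟩ := hrange ⟨y, rfl⟩
  exact ⟨x, i.isOpenEmbedding.injective (by rw [← Scheme.Hom.comp_apply, he, hx])⟩

section ActionMap

variable {ι : Type u} {P X : Scheme.{u}} (f : P ⟶ X) (a : ι → (P ⟶ P)) (ha : ∀ i, a i ≫ f = f)

noncomputable def actionMap : ∐ (fun _ : ι => P) ⟶ pullback f f :=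
  Sigma.desc fun i => pullback.lift (𝟙 P) (a i) (by rw [Category.id_comp, ha])

theorem ι_actionMap (i : ι) :
    Sigma.ι (fun _ : ι => P) i ≫ actionMap f a ha =
      pullback.lift (𝟙 P) (a i) (by rw [Category.id_comp, ha]) :=
  Sigma.ι_desc _ _

theorem fst_actionMap_ι (i : ι) (x : P) :
    pullback.fst f f (actionMap f a ha (Sigma.ι (fun _ : ι => P) i x)) = x := by
  rw [← Scheme.Hom.comp_apply, ← Scheme.Hom.comp_apply, ← Category.assoc, ι_actionMap,
    pullback.lift_fst]
  rfl

theorem snd_actionMap_ι (i : ι) (x : P) :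
    pullback.snd f f (actionMap f a ha (Sigma.ι (fun _ : ι => P) i x)) = a i x := by
  rw [← Scheme.Hom.comp_apply, ← Scheme.Hom.comp_apply, ← Category.assoc, ι_actionMap,
    pullback.lift_snd]

theorem exists_actionMap_eq [IsIso (actionMap f a ha)] (z : (pullback f f : Scheme.{u})) :
    ∃ i x, actionMap f a ha (Sigma.ι (fun _ : ι => P) i x) = z := by
  obtain ⟨w, rfl⟩ := (actionMap f a ha).surjective z
  obtain ⟨⟨i, x⟩, rfl⟩ := (sigmaMk (fun _ : ι => P)).surjective w
  exact ⟨i, x, by rw [sigmaMk_mk]⟩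

variable {κ : Type u} {Q : Scheme.{u}} (j : Q ⟶ P) (s : κ → ι) (b : κ → (Q ⟶ Q))

theorem actionMap_comp_pullbackMap (hb : ∀ k, b k ≫ j = j ≫ a (s k)) :
    actionMap (j ≫ f) b (fun k => by rw [← Category.assoc, hb, Category.assoc, ha]) ≫
        pullback.map (j ≫ f) (j ≫ f) f f j j (𝟙 X) (Category.comp_id _) (Category.comp_id _) =
      Sigma.desc (fun k => j ≫ Sigma.ι (fun _ : ι => P) (s k)) ≫ actionMap f a ha := by
  refine Sigma.hom_ext _ _ fun k => ?_
  rw [Sigma.ι_desc_assoc, Category.assoc, ι_actionMap]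
  simp only [← Category.assoc, ι_actionMap]
  apply pullback.hom_ext
  · rw [Category.assoc, pullback.lift_fst, pullback.lift_fst_assoc, Category.assoc,
      pullback.lift_fst, Category.id_comp, Category.comp_id]
  · rw [Category.assoc, pullback.lift_snd, pullback.lift_snd_assoc, Category.assoc,
      pullback.lift_snd, hb]

end ActionMap

theorem isIso_actionMap_of_isOpenImmersion {ι κ : Type u} {P Q X : Scheme.{u}} (f : P ⟶ X)
    (a : ι → (P ⟶ P)) (ha : ∀ i, a i ≫ f = f) [IsIso (actionMap f a ha)] (j : Q ⟶ P)
    [IsOpenImmersion j] {s : κ → ι} (hs : Function.Injective s) (b : κ → (Q ⟶ Q))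
    (hb : ∀ k, b k ≫ j = j ≫ a (s k))
    (hstab : ∀ i (y : Q), a i (j y) ∈ Set.range j → i ∈ Set.range s) :
    IsIso (actionMap (j ≫ f) b (fun k => by rw [← Category.assoc, hb, Category.assoc, ha])) := by
  have := isOpenImmersion_sigmaDesc_comp_ι j hs
  refine isIso_of_comp_eq_of_range_subset _ _ _ (actionMap_comp_pullbackMap f a ha j s b hb) ?_
  rw [Scheme.Pullback.range_map]
  rintro z ⟨⟨y, hy⟩, ⟨y', hy'⟩⟩
  obtain ⟨i, x, rfl⟩ := exists_actionMap_eq f a ha z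
  rw [fst_actionMap_ι] at hy
  subst hy
  rw [snd_actionMap_ι] at hy'
  obtain ⟨k, rfl⟩ := hstab i y ⟨y', hy'⟩
  refine ⟨Sigma.ι (fun _ : κ => Q) k y, ?_⟩
  rw [← Scheme.Hom.comp_apply, ← Category.assoc, Sigma.ι_desc, Category.assoc,
    Scheme.Hom.comp_apply, Scheme.Hom.comp_apply]

/-- Let `X` be a connected scheme and `P` an `X`-scheme (structure morphism `f`) whose
underlying space has open connected components.  Let a finite (abstract) group `G` act on
`P` by `X`-automorphisms (via `ρ : G →* Aut P` with `(ρ g).hom ≫ f = f`), in such a way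
that the canonical morphism `∐_{g ∈ G} P ⟶ P ×_X P`, whose `g`-th component is
`(id_P, g·)`, is an isomorphism (i.e. `P` is a `G`-torsor over `X`).  Let `p` be a point
of `P`, let `Q` be the connected component of `P` containing `p` (an open subscheme), and
let `H = {g : G | g · Q = Q}` be the subgroup of `G` stabilizing `Q`; for `h ∈ H` let
`qAct h : Q ⟶ Q` be the restriction of the automorphism `ρ h` to `Q` (characterized by
`qAct h ≫ Q.ι = Q.ι ≫ (ρ h).hom`).  Then the analogous canonical morphism
`∐_{h ∈ H} Q ⟶ Q ×_X Q` is an isomorphism; that is, `Q` with the restricted `H`-action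
is an `H`-torsor over `X`. -/
theorem component_isTorsor_of_torsor {G : Type u} [Group G]
    {P X : Scheme.{u}} (f : P ⟶ X)
    (ρ : G →* Aut P) (hf : ∀ g : G, (ρ g).hom ≫ f = f)
    (htorsor : IsIso (Sigma.desc (fun g : G =>
      (pullback.lift (𝟙 P) (ρ g).hom (by rw [Category.id_comp, hf]) :
        P ⟶ pullback f f))))
    (p : P) (Q : P.Opens) (hQ : (Q : Set P) = connectedComponent p)
    (qAct : ∀ _ : {g : G // (ρ g).hom.base '' (Q : Set P) = (Q : Set P)},
      Q.toScheme ⟶ Q.toScheme)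
    (hqAct : ∀ h, qAct h ≫ Q.ι = Q.ι ≫ (ρ h.1).hom) :
    IsIso (Sigma.desc (fun h : {g : G // (ρ g).hom.base '' (Q : Set P) = (Q : Set P)} =>
      (pullback.lift (𝟙 Q.toScheme) (qAct h)
        (by rw [Category.id_comp, ← Category.assoc, hqAct h, Category.assoc, hf]) :
        Q.toScheme ⟶ pullback (Q.ι ≫ f) (Q.ι ≫ f)))) := by
  have : IsIso (actionMap f (fun g => (ρ g).hom) hf) := htorsor
  refine isIso_actionMap_of_isOpenImmersion f _ hf Q.ι Subtype.val_injective qAct hqAct ?_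
  rintro g y ⟨y', hy'⟩
  have hmem : ∀ x : Q.toScheme, Q.ι x ∈ connectedComponent p := fun x => hQ ▸ x.2
  refine ⟨⟨g, ?_⟩, rfl⟩
  rw [hQ]
  exact (Scheme.homeoOfIso (ρ g)).image_connectedComponent_eq_self (hmem y) (hy' ▸ hmem y')
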